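/- Let K and L be convex bodies in ℝⁿ and let C ⊂ ℝⁿ × ℝⁿ be the convex hull of (K × {0}) ∪ ({0} × L). If both K and L contain the origin, then the intersection of C with the diagonal subspace E = {(x, x) : x ∈ ℝⁿ} equals {(x, x) : x ∈ (K° + L°)°}, where A° = {y ∈ ℝⁿ : ⟨x, y⟩ ≤ 1 for all x ∈ A} is the polar body. -/

import Mathlib

open MeasureTheory Set Pointwise
open scoped RealInnerProductSpace

/-- The polar body of a set `A ⊆ ℝⁿ`: all `y` with `⟪x, y⟫ ≤ 1` for every `x ∈ A`. -/
def polarBody {n : ℕ} (A : Set (EuclideanSpace ℝ (Fin n))) :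
    Set (EuclideanSpace ℝ (Fin n)) :=
  {y | ∀ x ∈ A, ⟪x, y⟫ ≤ 1}

/-!
A point `(x, x)` lies in the hull iff `x ∈ s • K ∩ (1 - s) • L` for some `s ∈ [0, 1]`.
By the bipolar theorem (and, for `s = 0`, because the polar of a bounded set is absorbing),
`x ∈ s • K` iff `⟪u, x⟫ ≤ s` for all `u ∈ K°`. So the condition reads
`sup_{K°} ⟪·, x⟫ + sup_{L°} ⟪·, x⟫ ≤ 1`, which is membership of `x` in `(K° + L°)°`.
-/

lemma mem_convexHull_prod_zero_union_zero_prod_iff {E F : Type*} [AddCommGroup E] [Module ℝ E]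
    [AddCommGroup F] [Module ℝ F] {K : Set E} {L : Set F} (hK : Convex ℝ K) (hL : Convex ℝ L)
    (hK_ne : K.Nonempty) (hL_ne : L.Nonempty) {x : E} {y : F} :
    (x, y) ∈ convexHull ℝ (K ×ˢ {0} ∪ {0} ×ˢ L) ↔
      ∃ s ∈ Icc (0 : ℝ) 1, x ∈ s • K ∧ y ∈ (1 - s) • L := by
  rw [(hK.prod (convex_singleton 0)).convexHull_union ((convex_singleton 0).prod hL)
    (hK_ne.prod (singleton_nonempty 0)) ((singleton_nonempty 0).prod hL_ne)]
  simp only [mem_convexJoin, segment, mem_prod, mem_singleton_iff, mem_ofPred_eq, Prod.ext_iff,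
    Prod.fst_add, Prod.snd_add, Prod.smul_fst, Prod.smul_snd, mem_Icc, mem_smul_set]
  constructor
  · rintro ⟨⟨k, l₀⟩, ⟨hk, rfl⟩, ⟨k₀, l⟩, ⟨rfl, hl⟩, s, t, hs, ht, hst, rfl, rfl⟩
    obtain rfl : t = 1 - s := by linarith
    exact ⟨s, ⟨hs, by linarith⟩, ⟨k, hk, by simp⟩, ⟨l, hl, by simp⟩⟩
  · rintro ⟨s, ⟨hs, hs1⟩, ⟨k, hk, rfl⟩, ⟨l, hl, rfl⟩⟩
    exact ⟨(k, 0), ⟨hk, rfl⟩, (0, l), ⟨rfl, hl⟩, s, 1 - s, hs, by linarith, by ring, by simp,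
      by simp⟩

section Polar

variable {n : ℕ}

lemma zero_mem_polarBody (A : Set (EuclideanSpace ℝ (Fin n))) : 0 ∈ polarBody A := by
  simp [polarBody]

theorem polarBody_polarBody {K : Set (EuclideanSpace ℝ (Fin n))} (hK_closed : IsClosed K)
    (hK_conv : Convex ℝ K) (hK0 : 0 ∈ K) : polarBody (polarBody K) = K := by
  refine Subset.antisymm (fun x hx => ?_) fun k hk u hu => real_inner_comm u k ▸ hu k hk
  by_contra hxK
  obtain ⟨f, c, hfK, hfx⟩ := geometric_hahn_banach_closed_point hK_conv hK_closed hxK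
  have hc : 0 < c := by simpa using hfK 0 hK0
  set u := c⁻¹ • (InnerProductSpace.toDual ℝ _).symm f
  have inner_u : ∀ y, ⟪y, u⟫ = c⁻¹ * f y := fun y => by
    rw [real_inner_smul_right, real_inner_comm, InnerProductSpace.toDual_symm_apply]
  have hu : u ∈ polarBody K := fun k hk => by
    rw [inner_u, inv_mul_le_one₀ hc]
    exact (hfK k hk).le
  have := hx u hu
  rw [real_inner_comm, inner_u, inv_mul_le_one₀ hc] at this
  linarith

lemma exists_pos_smul_mem_polarBody {K : Set (EuclideanSpace ℝ (Fin n))}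
    (hK : Bornology.IsBounded K) (x : EuclideanSpace ℝ (Fin n)) :
    ∃ c : ℝ, 0 < c ∧ c • x ∈ polarBody K := by
  obtain ⟨M, hM, hKM⟩ := hK.exists_pos_norm_le
  refine ⟨(M * ‖x‖ + 1)⁻¹, by positivity, fun k hk => ?_⟩
  calc ⟪k, (M * ‖x‖ + 1)⁻¹ • x⟫ = (M * ‖x‖ + 1)⁻¹ * ⟪k, x⟫ := real_inner_smul_right _ _ _
    _ ≤ (M * ‖x‖ + 1)⁻¹ * (M * ‖x‖ + 1) := by
        gcongr
        calc ⟪k, x⟫ ≤ ‖k‖ * ‖x‖ := real_inner_le_norm k x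
          _ ≤ M * ‖x‖ + 1 := by nlinarith [hKM k hk, norm_nonneg x]
    _ = 1 := inv_mul_cancel₀ (by positivity)

lemma eq_zero_of_forall_polarBody_inner_nonpos {K : Set (EuclideanSpace ℝ (Fin n))}
    (hK : Bornology.IsBounded K) {x : EuclideanSpace ℝ (Fin n)}
    (hx : ∀ u ∈ polarBody K, ⟪u, x⟫ ≤ 0) : x = 0 := by
  obtain ⟨c, hc, hcx⟩ := exists_pos_smul_mem_polarBody hK x
  have : c * ‖x‖ ^ 2 ≤ 0 := by simpa [real_inner_smul_left] using hx _ hcx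
  simpa [hc.not_ge] using nonpos_of_mul_nonpos_right this hc

lemma mem_smul_iff_forall_polarBody_inner_le {K : Set (EuclideanSpace ℝ (Fin n))}
    (hK_closed : IsClosed K) (hK_conv : Convex ℝ K) (hK_bdd : Bornology.IsBounded K)
    (hK0 : 0 ∈ K) {x : EuclideanSpace ℝ (Fin n)} {r : ℝ} (hr : 0 ≤ r) :
    x ∈ r • K ↔ ∀ u ∈ polarBody K, ⟪u, x⟫ ≤ r := by
  rcases hr.eq_or_lt with rfl | hr
  · rw [zero_smul_set ⟨0, hK0⟩, mem_zero]
    exact ⟨fun hx u _ => by simp [hx], eq_zero_of_forall_polarBody_inner_nonpos hK_bdd⟩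
  · rw [mem_smul_set_iff_inv_smul_mem₀ hr.ne']
    conv_lhs => rw [← polarBody_polarBody hK_closed hK_conv hK0]
    refine forall₂_congr fun u _ => ?_
    rw [real_inner_smul_right, inv_mul_le_one₀ hr]

lemma mem_polarBody_add_iff {U V : Set (EuclideanSpace ℝ (Fin n))} (hU : 0 ∈ U) (hV : 0 ∈ V)
    {x : EuclideanSpace ℝ (Fin n)} :
    x ∈ polarBody (U + V) ↔
      ∃ s ∈ Icc (0 : ℝ) 1, (∀ u ∈ U, ⟪u, x⟫ ≤ s) ∧ ∀ v ∈ V, ⟪v, x⟫ ≤ 1 - s := by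
  constructor
  · intro hx
    obtain ⟨s, hsU, hsV⟩ := exists_between_of_forall_le (Nonempty.image (fun u => ⟪u, x⟫) ⟨0, hU⟩)
      (Nonempty.image (fun v => 1 - ⟪v, x⟫) ⟨0, hV⟩) <| by
        rintro _ ⟨u, hu, rfl⟩ _ ⟨v, hv, rfl⟩
        have := hx _ (add_mem_add hu hv)
        rw [inner_add_left] at this
        linarith
    have hs0 : 0 ≤ s := by simpa using hsU ⟨0, hU, rfl⟩
    have hs1 : s ≤ 1 := by simpa using hsV ⟨0, hV, rfl⟩
    exact ⟨s, ⟨hs0, hs1⟩, fun u hu => hsU ⟨u, hu, rfl⟩, fun v hv => by linarith [hsV ⟨v, hv, rfl⟩]⟩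
  · rintro ⟨s, -, hsU, hsV⟩ _ ⟨u, hu, v, hv, rfl⟩
    show ⟪u + v, x⟫ ≤ 1
    linarith [inner_add_left (𝕜 := ℝ) u v x, hsU u hu, hsV v hv]

end Polar

theorem diag_section_conv_hull_prod_general (n : ℕ)
    (K L : Set (EuclideanSpace ℝ (Fin n)))
    (hK_compact : IsCompact K) (hK_conv : Convex ℝ K)
    (hK0 : (0 : EuclideanSpace ℝ (Fin n)) ∈ K)
    (hL_compact : IsCompact L) (hL_conv : Convex ℝ L)
    (hL0 : (0 : EuclideanSpace ℝ (Fin n)) ∈ L)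
    (C : Set (EuclideanSpace ℝ (Fin n) × EuclideanSpace ℝ (Fin n)))
    (hC : C = convexHull ℝ
      (K ×ˢ ({0} : Set (EuclideanSpace ℝ (Fin n))) ∪
       ({0} : Set (EuclideanSpace ℝ (Fin n))) ×ˢ L)) :
    C ∩ {p : EuclideanSpace ℝ (Fin n) × EuclideanSpace ℝ (Fin n) | p.1 = p.2}
      = (fun x => (x, x)) '' polarBody (polarBody K + polarBody L) := by
  have hdiag : ∀ x, (x, x) ∈ C ↔ x ∈ polarBody (polarBody K + polarBody L) := fun x => by
    rw [hC, mem_convexHull_prod_zero_union_zero_prod_iff hK_conv hL_conv ⟨0, hK0⟩ ⟨0, hL0⟩,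
      mem_polarBody_add_iff (zero_mem_polarBody K) (zero_mem_polarBody L)]
    refine exists_congr fun s => and_congr_right fun hs => and_congr ?_ ?_
    · exact mem_smul_iff_forall_polarBody_inner_le hK_compact.isClosed hK_conv
        hK_compact.isBounded hK0 hs.1
    · exact mem_smul_iff_forall_polarBody_inner_le hL_compact.isClosed hL_conv
        hL_compact.isBounded hL0 (sub_nonneg.2 hs.2)
  ext ⟨x, y⟩
  simp only [mem_inter_iff, mem_ofPred_eq, mem_image, Prod.mk.injEq]
  constructor
  · rintro ⟨hxC, rfl : x = y⟩
    exact ⟨x, (hdiag x).1 hxC, rfl, rfl⟩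
  · rintro ⟨z, hz, rfl, rfl⟩
    exact ⟨(hdiag z).2 hz, rfl⟩

theorem diag_section_conv_hull_prod (n : ℕ)
    (K L : Set (EuclideanSpace ℝ (Fin n)))
    (hK_compact : IsCompact K) (hK_conv : Convex ℝ K)
    (hK_int : (interior K).Nonempty) (hK0 : (0 : EuclideanSpace ℝ (Fin n)) ∈ K)
    (hL_compact : IsCompact L) (hL_conv : Convex ℝ L)
    (hL_int : (interior L).Nonempty) (hL0 : (0 : EuclideanSpace ℝ (Fin n)) ∈ L)
    (C : Set (EuclideanSpace ℝ (Fin n) × EuclideanSpace ℝ (Fin n)))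
    (hC : C = convexHull ℝ
      (K ×ˢ ({0} : Set (EuclideanSpace ℝ (Fin n))) ∪
       ({0} : Set (EuclideanSpace ℝ (Fin n))) ×ˢ L)) :
    C ∩ {p : EuclideanSpace ℝ (Fin n) × EuclideanSpace ℝ (Fin n) | p.1 = p.2}
      = (fun x => (x, x)) '' polarBody (polarBody K + polarBody L) :=
  diag_section_conv_hull_prod_general n K L hK_compact hK_conv hK0 hL_compact hL_conv hL0 C hC
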